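/- arXiv:2411.17579 — 4 statements merged into one kernel-verified Lean document; each statement's English description precedes it below -/
import Mathlib

section
/- Let R → A → B be ring homomorphisms, and define the Lipschitz saturation A*_{B,R} = {x ∈ B : Δ(x) ∈ closure of ker φ under integral closure}, where Δ(b) = b ⊗ 1 - 1 ⊗ b and φ : B ⊗_R B → B ⊗_A B is the canonical map. If x ∈ B and α, d ∈ ℕ are such that x^α ∈ A*_{B,R} and x^{α+d} ∈ A*_{B,R}, then x^{α+sd} ∈ A*_{B,R} for all s ∈ ℕ. -/
open scoped TensorProduct

/-- `t` lies in the integral closure of the ideal `I`: it satisfies an equation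
`t^n + c₁ t^(n-1) + ⋯ + c_n = 0` with `c_i ∈ I^i`. -/
def MemIdealIntegralClosure {T : Type*} [CommRing T] (I : Ideal T) (t : T) : Prop :=
  ∃ n : ℕ, 0 < n ∧ ∃ c : ℕ → T, (∀ i, c i ∈ I ^ i) ∧
    t ^ n + ∑ i ∈ Finset.range n, c (i + 1) * t ^ (n - (i + 1)) = 0

/-- The canonical map `B ⊗[R] B → B ⊗[A] B`. -/
noncomputable def canonicalTensorMap (R A B : Type*) [CommRing R] [CommRing A] [CommRing B]
    [Algebra R A] [Algebra R B] [Algebra A B] [IsScalarTower R A B] :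
    B ⊗[R] B →ₐ[R] B ⊗[A] B :=
  Algebra.TensorProduct.lift (Algebra.TensorProduct.includeLeft)
    ((Algebra.TensorProduct.includeRight).restrictScalars R) (fun _ _ => Commute.all _ _)

/-- The Lipschitz saturation of `A` in `B` relative to `R → A → B`. -/
noncomputable def lipschitzSaturation (R A B : Type*) [CommRing R] [CommRing A] [CommRing B]
    [Algebra R A] [Algebra R B] [Algebra A B] [IsScalarTower R A B] : Set B :=
  {x : B | MemIdealIntegralClosure (RingHom.ker (canonicalTensorMap R A B))
    (x ⊗ₜ[R] (1 : B) - (1 : B) ⊗ₜ[R] x)}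

open Polynomial in
/-- If `t` is integral over the ideal `I`, then `t·X` is integral over the Rees algebra of `I`. -/
lemma MemIdealIntegralClosure.isIntegral {T : Type*} [CommRing T] {I : Ideal T} {t : T}
    (h : MemIdealIntegralClosure I t) :
    IsIntegral (reesAlgebra I) ((Polynomial.monomial 1 t : T[X])) := by
  obtain ⟨n, hn, c, hc, heq⟩ := h
  refine ⟨X ^ n + ∑ i ∈ Finset.range n, C
      (⟨Polynomial.monomial (i + 1) (c (i + 1)),
        reesAlgebra.monomial_mem.mpr (hc (i + 1))⟩ : reesAlgebra I) * X ^ (n - (i + 1)), ?_, ?_⟩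
  · apply monic_X_pow_add
    refine lt_of_le_of_lt (degree_sum_le _ _) ?_
    rw [Finset.sup_lt_iff (by exact_mod_cast WithBot.bot_lt_coe n)]
    intro i hi
    refine lt_of_le_of_lt (degree_C_mul_X_pow_le _ _) ?_
    have hi' := Finset.mem_range.mp hi
    have hlt : n - (i + 1) < n := by omega
    exact_mod_cast hlt
  · simp only [eval₂_add, eval₂_X_pow, eval₂_finset_sum, eval₂_mul, eval₂_C]
    have halg : ∀ a : reesAlgebra I, algebraMap (reesAlgebra I) T[X] a = (a : T[X]) := fun a => rfl
    rw [Polynomial.monomial_pow, one_mul]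
    have hterm : ∀ i ∈ Finset.range n,
        algebraMap (reesAlgebra I) T[X]
            (⟨Polynomial.monomial (i + 1) (c (i + 1)),
              reesAlgebra.monomial_mem.mpr (hc (i + 1))⟩ : reesAlgebra I)
          * (Polynomial.monomial 1 t) ^ (n - (i + 1))
        = Polynomial.monomial n (c (i + 1) * t ^ (n - (i + 1))) := by
      intro i hi
      have hidx : i + 1 + (n - (i + 1)) = n := by
        have := Finset.mem_range.mp hi; omega
      rw [halg, Polynomial.monomial_pow, one_mul, Polynomial.monomial_mul_monomial, hidx]
    rw [Finset.sum_congr rfl hterm, ← map_sum (Polynomial.monomial n), ← map_add, heq,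
      Polynomial.monomial_zero_right]

open Polynomial in
/-- If `t·X` is integral over the Rees algebra of `I`, then `t` is integral over `I`. -/
lemma MemIdealIntegralClosure.of_isIntegral {T : Type*} [CommRing T] {I : Ideal T} {t : T}
    (h : IsIntegral (reesAlgebra I) ((Polynomial.monomial 1 t : T[X]))) :
    MemIdealIntegralClosure I t := by
  rcases subsingleton_or_nontrivial T with hT | hT
  · exact ⟨1, one_pos, fun _ => 0, fun i => (I ^ i).zero_mem, Subsingleton.elim _ _⟩
  obtain ⟨p, hp, hpe⟩ := h
  -- replace `p` by `p * X` to ensure positive degree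
  set q : Polynomial (reesAlgebra I) := p * X with hq
  have hqm : q.Monic := hp.mul (monic_X)
  have hqe : Polynomial.eval₂ (algebraMap (reesAlgebra I) T[X]) (Polynomial.monomial 1 t) q = 0 := by
    rw [hq, eval₂_mul, hpe, zero_mul]
  set n : ℕ := q.natDegree with hnd
  have : Nontrivial (reesAlgebra I) :=
    ⟨1, 0, fun h => one_ne_zero (congrArg Subtype.val h)⟩
  have hn : 0 < n := by
    have hmul := Polynomial.natDegree_mul' (p := p) (q := (X : Polynomial (reesAlgebra I)))
      (by simp [hp.leadingCoeff])
    rw [hnd, hq, hmul, Polynomial.natDegree_X]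
    omega
  refine ⟨n, hn, fun i => ((q.coeff (n - i) : T[X])).coeff i, fun i => (q.coeff (n - i)).2 i, ?_⟩
  have hexp := eval₂_eq_sum_range (algebraMap (reesAlgebra I) T[X]) (Polynomial.monomial 1 t) (p := q)
  rw [hqe] at hexp
  have hco := congrArg (fun r : T[X] => r.coeff n) hexp.symm
  simp only [Polynomial.coeff_zero] at hco
  rw [Polynomial.finset_sum_coeff] at hco
  have hterm : ∀ i ∈ Finset.range (n + 1),
      (algebraMap (reesAlgebra I) T[X] (q.coeff i) * (Polynomial.monomial 1 t) ^ i).coeff n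
        = ((q.coeff i : T[X])).coeff (n - i) * t ^ i := by
    intro i hi
    have hi' : i ≤ n := by have := Finset.mem_range.mp hi; omega
    have h0 : (algebraMap (reesAlgebra I) T[X] (q.coeff i) : T[X]) = (q.coeff i : T[X]) := rfl
    rw [h0, Polynomial.monomial_pow, one_mul]
    calc ((q.coeff i : T[X]) * Polynomial.monomial i (t ^ i)).coeff n
        = ((q.coeff i : T[X]) * Polynomial.monomial i (t ^ i)).coeff (n - i + i) := by
          rw [Nat.sub_add_cancel hi']
      _ = ((q.coeff i : T[X])).coeff (n - i) * t ^ i := Polynomial.coeff_mul_monomial _ _ _ _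
  rw [Finset.sum_congr rfl hterm, Finset.sum_range_succ] at hco
  have hlead : ((q.coeff n : T[X])).coeff (n - n) = 1 := by
    have : q.coeff n = 1 := hqm.coeff_natDegree
    rw [this]
    simp
  rw [hlead, one_mul] at hco
  have hrefl := Finset.sum_range_reflect
    (fun j => ((q.coeff j : T[X])).coeff (n - j) * t ^ j) n
  rw [← hco, add_comm (t ^ n)]
  congr 1
  rw [← hrefl]
  refine Finset.sum_congr rfl fun i hi => ?_
  have hi' : i < n := Finset.mem_range.mp hi
  have e1 : n - 1 - i = n - (i + 1) := by omega
  simp only [e1]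
  rw [show n - (n - (i + 1)) = i + 1 from by omega]

lemma MemIdealIntegralClosure.mul_mem {T : Type*} [CommRing T] {I : Ideal T} {t : T}
    (h : MemIdealIntegralClosure I t) (u : T) : MemIdealIntegralClosure I (t * u) := by
  obtain ⟨n, hn, c, hc, heq⟩ := h
  refine ⟨n, hn, fun i => c i * u ^ i, fun i => Ideal.mul_mem_right _ _ (hc i), ?_⟩
  have hterm : ∀ i ∈ Finset.range n,
      c (i + 1) * u ^ (i + 1) * (t * u) ^ (n - (i + 1))
        = c (i + 1) * t ^ (n - (i + 1)) * u ^ n := by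
    intro i hi
    have h2 : i + 1 + (n - (i + 1)) = n := by
      have := Finset.mem_range.mp hi; omega
    rw [mul_pow]
    calc c (i + 1) * u ^ (i + 1) * (t ^ (n - (i + 1)) * u ^ (n - (i + 1)))
        = c (i + 1) * t ^ (n - (i + 1)) * (u ^ (i + 1) * u ^ (n - (i + 1))) := by ring
      _ = c (i + 1) * t ^ (n - (i + 1)) * u ^ n := by rw [← pow_add, h2]
  rw [Finset.sum_congr rfl hterm, mul_pow, ← Finset.sum_mul, ← add_mul, heq, zero_mul]

lemma MemIdealIntegralClosure.add {T : Type*} [CommRing T] {I : Ideal T} {t s : T}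
    (ht : MemIdealIntegralClosure I t) (hs : MemIdealIntegralClosure I s) :
    MemIdealIntegralClosure I (t + s) := by
  have h := ht.isIntegral.add hs.isIntegral
  rw [← map_add] at h
  exact .of_isIntegral h

lemma MemIdealIntegralClosure.sub {T : Type*} [CommRing T] {I : Ideal T} {t s : T}
    (ht : MemIdealIntegralClosure I t) (hs : MemIdealIntegralClosure I s) :
    MemIdealIntegralClosure I (t - s) := by
  have := ht.add (hs.mul_mem (-1))
  rwa [mul_neg_one, ← sub_eq_add_neg] at this

/-- The key identity: `Δ(ab) = Δ(a)·(b⊗1) + (1⊗a)·Δ(b)`. -/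
lemma delta_mul (R B : Type*) [CommRing R] [CommRing B] [Algebra R B] (a b : B) :
    (a * b) ⊗ₜ[R] (1 : B) - (1 : B) ⊗ₜ[R] (a * b)
      = (a ⊗ₜ[R] (1 : B) - (1 : B) ⊗ₜ[R] a) * (b ⊗ₜ[R] (1 : B))
        + ((1 : B) ⊗ₜ[R] a) * (b ⊗ₜ[R] (1 : B) - (1 : B) ⊗ₜ[R] b) := by
  simp only [sub_mul, mul_sub, Algebra.TensorProduct.tmul_mul_tmul, one_mul, mul_one]
  abel

theorem pow_mem_lipschitzSaturation (R A B : Type*) [CommRing R] [CommRing A] [CommRing B]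
    [Algebra R A] [Algebra R B] [Algebra A B] [IsScalarTower R A B]
    (x : B) (α d : ℕ)
    (hα : x ^ α ∈ lipschitzSaturation R A B)
    (hαd : x ^ (α + d) ∈ lipschitzSaturation R A B) :
    ∀ s : ℕ, x ^ (α + s * d) ∈ lipschitzSaturation R A B := by
  intro s
  induction s with
  | zero => simpa using hα
  | succ s ih =>
    show MemIdealIntegralClosure _ _
    have e : x ^ (α + (s + 1) * d) = (x ^ (α + s * d)) * x ^ d := by
      rw [← pow_add]; congr 1; ring
    rw [e, delta_mul]
    have hI1 : MemIdealIntegralClosure (RingHom.ker (canonicalTensorMap R A B))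
        (((x ^ (α + s * d)) ⊗ₜ[R] (1 : B) - (1 : B) ⊗ₜ[R] (x ^ (α + s * d))) * ((x ^ d) ⊗ₜ[R] (1 : B))) :=
      (ih).mul_mem _
    refine hI1.add ?_
    -- second summand : (1 ⊗ x^(α+s*d)) * Δ(x^d)
    have e2 : ((1 : B) ⊗ₜ[R] (x ^ (α + s * d))) * ((x ^ d) ⊗ₜ[R] (1 : B) - (1 : B) ⊗ₜ[R] (x ^ d))
        = (((1 : B) ⊗ₜ[R] (x ^ (s * d))) *
            (((1 : B) ⊗ₜ[R] (x ^ α)) * ((x ^ d) ⊗ₜ[R] (1 : B) - (1 : B) ⊗ₜ[R] (x ^ d)))) := by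
      rw [← mul_assoc]
      congr 1
      rw [Algebra.TensorProduct.tmul_mul_tmul, one_mul, ← pow_add]
      congr 2
      ring
    rw [e2]
    have e3 : ((1 : B) ⊗ₜ[R] (x ^ α)) * ((x ^ d) ⊗ₜ[R] (1 : B) - (1 : B) ⊗ₜ[R] (x ^ d))
        = ((x ^ (α + d)) ⊗ₜ[R] (1 : B) - (1 : B) ⊗ₜ[R] (x ^ (α + d)))
          - ((x ^ α) ⊗ₜ[R] (1 : B) - (1 : B) ⊗ₜ[R] (x ^ α)) * ((x ^ d) ⊗ₜ[R] (1 : B)) := by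
      have := delta_mul R B (x ^ α) (x ^ d)
      rw [← pow_add] at this
      rw [this]; ring
    rw [e3]
    have h4 : MemIdealIntegralClosure (RingHom.ker (canonicalTensorMap R A B))
        (((x ^ (α + d)) ⊗ₜ[R] (1 : B) - (1 : B) ⊗ₜ[R] (x ^ (α + d)))
          - ((x ^ α) ⊗ₜ[R] (1 : B) - (1 : B) ⊗ₜ[R] (x ^ α)) * ((x ^ d) ⊗ₜ[R] (1 : B))) :=
      hαd.sub (hα.mul_mem _)
    have := h4.mul_mem ((1 : B) ⊗ₜ[R] (x ^ (s * d)))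
    rwa [mul_comm] at this
end

section
/- Let V be a discrete valuation ring with uniformizer t, let u ∈ V be a unit, let α₁ < ⋯ < α_m be natural numbers, and let r ∈ ℕ. Then (1 - u^{gcd(α₁,...,α_m)})·t^{rα_m} lies in the ideal of V generated by (1 - u^{α₁})t^{rα₁}, ..., (1 - u^{α_m})t^{rα_m}. -/
/-!
Modulo the ideal `I` of the statement, each generator says `u ^ αᵢ * T = T` for
`T = t ^ (r * α_m)`, since `α_m` is the largest exponent. So `T` is a periodic point of
multiplication by `u` on `V ⧸ I` of every period `αᵢ`, and the periods of a point are closed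
under `gcd`: the euclidean algorithm in the exponents.
-/

open Function

theorem Function.IsPeriodicPt.finset_gcd {α ι : Type*} {f : α → α} {x : α} (s : Finset ι)
    (n : ι → ℕ) (h : ∀ i ∈ s, IsPeriodicPt f (n i) x) : IsPeriodicPt f (s.gcd n) x := by
  classical
  induction s using Finset.induction_on with
  | empty => exact isPeriodicPt_zero f x
  | insert i s _ ih =>
    rw [Finset.gcd_insert]
    exact (h i (s.mem_insert_self i)).gcd (ih fun j hj => h j (Finset.mem_insert_of_mem hj))

theorem Ideal.isPeriodicPt_mul_mk_iff {R : Type*} [CommRing R] (I : Ideal R) (u s : R) (n : ℕ) :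
    IsPeriodicPt (Ideal.Quotient.mk I u * ·) n (Ideal.Quotient.mk I s) ↔ (1 - u ^ n) * s ∈ I := by
  rw [IsPeriodicPt, IsFixedPt, mul_left_iterate, ← Ideal.Quotient.eq_zero_iff_mem, map_mul,
    map_sub, map_one, map_pow, sub_mul, one_mul, sub_eq_zero, eq_comm]

theorem Ideal.one_sub_pow_mul_pow_mem_of_le {R : Type*} [CommRing R] {I : Ideal R} {u t : R}
    {k n r : ℕ} (hk : (1 - u ^ k) * t ^ (r * k) ∈ I) (hkn : k ≤ n) :
    (1 - u ^ k) * t ^ (r * n) ∈ I := by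
  rw [← Nat.add_sub_of_le hkn, Nat.mul_add, pow_add, ← mul_assoc]
  exact I.mul_mem_right _ hk

theorem dvr_gcd_step (V : Type*) [CommRing V] (t : V) (u : V)
    (m : ℕ) (hm : 0 < m) (α : Fin m → ℕ) (hα : StrictMono α) (r : ℕ) :
    (1 - u ^ (Finset.univ.gcd α)) * t ^ (r * α ⟨m - 1, by omega⟩) ∈
      Ideal.span (Set.range fun i => (1 - u ^ (α i)) * t ^ (r * α i)) := by
  set I := Ideal.span (Set.range fun i => (1 - u ^ (α i)) * t ^ (r * α i))
  have hperiod (i : Fin m) : IsPeriodicPt (Ideal.Quotient.mk I u * ·) (α i)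
      (Ideal.Quotient.mk I (t ^ (r * α ⟨m - 1, by omega⟩))) := by
    refine (I.isPeriodicPt_mul_mk_iff _ _ _).2
      (Ideal.one_sub_pow_mul_pow_mem_of_le (Ideal.subset_span ⟨i, rfl⟩) (hα.monotone ?_))
    rw [Fin.le_def]
    exact Nat.le_sub_one_of_lt i.isLt
  exact (I.isPeriodicPt_mul_mk_iff _ _ _).1 (IsPeriodicPt.finset_gcd _ _ fun i _ => hperiod i)
end

section
/- Let R be a noetherian commutative ring, m ≥ 2, and 0 < α₁ < ⋯ < α_m natural numbers with d = gcd(α₁,...,α_m). Then for every s ∈ ℕ, the monomial t^{α_m + sd} lies in the Lipschitz saturation of R[t^{α₁},...,t^{α_m}] in R[t] over R, i.e., (t^{α_m+sd} ⊗ 1 - 1 ⊗ t^{α_m+sd}) lies in the integral closure of the ideal of R[t] ⊗_R R[t] generated by {t^{α_i} ⊗ 1 - 1 ⊗ t^{α_i} : 1 ≤ i ≤ m}. -/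
open scoped TensorProduct
open Polynomial

namespace LipschitzAux

/-- Bezout for finset gcd over ℕ. -/
theorem finset_gcd_bezout {ι : Type*} [DecidableEq ι] (t : Finset ι) (f : ι → ℕ) :
    ∃ z : ι → ℤ, ((t.gcd f : ℕ) : ℤ) = ∑ i ∈ t, z i * (f i : ℤ) := by
  classical
  induction t using Finset.induction with
  | empty => exact ⟨0, by simp⟩
  | @insert a t ha ih =>
    obtain ⟨z, hz⟩ := ih
    refine ⟨fun i => if i = a then Nat.gcdA (f a) (t.gcd f)
      else Nat.gcdB (f a) (t.gcd f) * z i, ?_⟩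
    rw [Finset.gcd_insert, Finset.sum_insert ha]
    beta_reduce
    rw [if_pos rfl]
    have hsum : (∑ i ∈ t, (if i = a then Nat.gcdA (f a) (t.gcd f)
        else Nat.gcdB (f a) (t.gcd f) * z i) * (f i : ℤ))
        = Nat.gcdB (f a) (t.gcd f) * ∑ i ∈ t, z i * (f i : ℤ) := by
      rw [Finset.mul_sum]
      refine Finset.sum_congr rfl fun i hi => ?_
      rw [if_neg (by rintro rfl; exact ha hi)]
      ring
    rw [hsum, ← hz]
    have hgcd : GCDMonoid.gcd (f a) (t.gcd f) = Nat.gcd (f a) (t.gcd f) := rfl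
    rw [hgcd, Nat.gcd_eq_gcd_ab (f a) (t.gcd f)]
    ring

theorem mul_mem_closure {a : ℕ} (S : AddSubmonoid ℕ) (ha : a ∈ S) (k : ℕ) : k * a ∈ S := by
  induction k with
  | zero => simpa using S.zero_mem
  | succ k ih => rw [Nat.succ_mul]; exact S.add_mem ih ha

variable {T : Type*} [CommRing T] (x y : T) {m : ℕ} (α : Fin m → ℕ)

/-- The difference element `x^n - y^n`. -/
def DD (n : ℕ) : T := x ^ n - y ^ n

theorem DD_add (a b : ℕ) : DD x y (a + b) = x ^ a * DD x y b + y ^ b * DD x y a := by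
  simp only [DD, pow_add]; ring

/-- Generating set for the "refined" span: monomials times generators, of total degree `w`. -/
def Ngen (w : ℕ) : Set T :=
  {v | ∃ a b i, a + b + α i = w ∧ v = x ^ a * y ^ b * DD x y (α i)}

theorem mul_mono_mem_span {w w' : ℕ} (c e : ℕ) (h : c + e + w = w') {v : T}
    (hv : v ∈ Submodule.span T (Ngen x y α w)) :
    x ^ c * y ^ e * v ∈ Submodule.span T (Ngen x y α w') := by
  induction hv using Submodule.span_induction with
  | mem v hv =>
    obtain ⟨a, b, i, hab, rfl⟩ := hv
    exact Submodule.subset_span ⟨c + a, e + b, i, by omega, by rw [pow_add, pow_add]; ring⟩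
  | zero => simp
  | add u v hu hv ihu ihv =>
    rw [mul_add]; exact add_mem ihu ihv
  | smul t v hv ih =>
    have h2 : x ^ c * y ^ e * (t • v) = t • (x ^ c * y ^ e * v) := by
      simp only [smul_eq_mul]; ring
    rw [h2]; exact Submodule.smul_mem _ _ ih

theorem DD_mem_span {w : ℕ} (hw : w ∈ AddSubmonoid.closure (Set.range α)) :
    DD x y w ∈ Submodule.span T (Ngen x y α w) := by
  induction hw using AddSubmonoid.closure_induction with
  | mem w hw =>
    obtain ⟨i, rfl⟩ := hw
    exact Submodule.subset_span ⟨0, 0, i, by omega, by simp⟩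
  | zero => simp [DD]
  | add u v hu hv ihu ihv =>
    have h1 : DD x y (u + v) = x ^ u * y ^ 0 * DD x y v + x ^ 0 * y ^ v * DD x y u := by
      rw [DD_add]; ring
    rw [h1]
    exact add_mem (mul_mono_mem_span x y α u 0 (by omega) ihv)
      (mul_mono_mem_span x y α 0 v (by omega) ihu)

/-- The ideal generated by the differences. -/
def II : Ideal T := Ideal.span (Set.range fun i => DD x y (α i))

/-- The ideal generated by all monomials of degree `C`. -/
def MM (C : ℕ) : Ideal T :=
  Ideal.span ((fun a => x ^ a * y ^ (C - a)) '' Set.Iic C)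

theorem mono_mem_MM (C a b : ℕ) (h : C ≤ a + b) : x ^ a * y ^ b ∈ MM x y C := by
  rcases le_or_gt C a with hC | hC
  · obtain ⟨c, rfl⟩ : ∃ c, a = c + C := ⟨a - C, by omega⟩
    have hg : x ^ C * y ^ (C - C) ∈ MM x y C :=
      Ideal.subset_span ⟨C, Set.mem_Iic.mpr le_rfl, rfl⟩
    have h2 : x ^ (c + C) * y ^ b = (x ^ c * y ^ b) * (x ^ C * y ^ (C - C)) := by
      rw [Nat.sub_self, pow_add]; ring
    rw [h2]
    exact Ideal.mul_mem_left _ _ hg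
  · obtain ⟨c, rfl⟩ : ∃ c, b = c + (C - a) := ⟨b - (C - a), by omega⟩
    have hg : x ^ a * y ^ (C - a) ∈ MM x y C :=
      Ideal.subset_span ⟨a, Set.mem_Iic.mpr (by omega), rfl⟩
    have h2 : x ^ a * y ^ (c + (C - a)) = y ^ c * (x ^ a * y ^ (C - a)) := by
      rw [pow_add]; ring
    rw [h2]
    exact Ideal.mul_mem_left _ _ hg

theorem key_mem' (C A0 : ℕ) (hA0 : ∀ i, α i ≤ A0) {w c e : ℕ}
    (hdeg : C + A0 ≤ c + e + w) {v : T} (hv : v ∈ Submodule.span T (Ngen x y α w)) :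
    x ^ c * y ^ e * v ∈ II x y α • MM x y C := by
  induction hv using Submodule.span_induction with
  | mem v hv =>
    obtain ⟨a, b, i, hab, rfl⟩ := hv
    have heq : x ^ c * y ^ e * (x ^ a * y ^ b * DD x y (α i))
        = DD x y (α i) * (x ^ (c + a) * y ^ (e + b)) := by
      rw [pow_add, pow_add]; ring
    rw [heq]
    exact Submodule.smul_mem_smul (Ideal.subset_span ⟨i, rfl⟩)
      (mono_mem_MM x y C _ _ (by have := hA0 i; omega))
  | zero => simp
  | add u v hu hv ihu ihv =>
    rw [mul_add]; exact add_mem ihu ihv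
  | smul t v hv ih =>
    have h2 : x ^ c * y ^ e * (t • v) = t • (x ^ c * y ^ e * v) := by
      simp only [smul_eq_mul]; ring
    rw [h2]; exact Submodule.smul_mem _ _ ih

theorem key_mem (C A0 : ℕ) (hA0 : ∀ i, α i ≤ A0) {w c e : ℕ}
    (hw : w ∈ AddSubmonoid.closure (Set.range α)) (hdeg : C + A0 ≤ c + e + w) :
    x ^ c * y ^ e * DD x y w ∈ II x y α • MM x y C :=
  key_mem' x y α C A0 hA0 hdeg (DD_mem_span x y α hw)

/-- The core abstract result: the difference element `x^β - y^β` with `β = A0 + s*d`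
is integral over the ideal generated by the `x^(α i) - y^(α i)`. -/
theorem main_abstract (A0 d p q s Q C β : ℕ)
    (hA0S : A0 ∈ AddSubmonoid.closure (Set.range α))
    (hA0max : ∀ i, α i ≤ A0)
    (hpS : p ∈ AddSubmonoid.closure (Set.range α))
    (hqS : q ∈ AddSubmonoid.closure (Set.range α))
    (hpq : p = q + d)
    (hQ : Q = s * q) (hC : C = 2 * Q) (hβ : β = A0 + s * d)
    (hreg : ∀ w : T, w * y ^ C = 0 → w = 0) :
    MemIdealIntegralClosure (II x y α) (DD x y β) := by
  classical
  set S : AddSubmonoid ℕ := AddSubmonoid.closure (Set.range α) with hS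
  have hβge : A0 ≤ β := hβ ▸ Nat.le_add_right A0 (s * d)
  have hβQS : Q + β ∈ S := by
    have h4 : Q + β = A0 + s * p := by rw [hQ, hβ, hpq]; ring
    rw [h4]
    exact S.add_mem hA0S (mul_mem_closure S hpS s)
  have hQS : Q ∈ S := hQ ▸ mul_mem_closure S hqS s
  -- the key step
  have step : ∀ a b : ℕ, a + b = C → DD x y β * (x ^ a * y ^ b) ∈ II x y α • MM x y C := by
    intro a b hab
    rcases le_or_gt Q a with hQa | hQa
    · obtain ⟨c, rfl⟩ : ∃ c, a = c + Q := ⟨a - Q, by omega⟩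
      have e1 := DD_add x y Q β
      have e2 : DD x y β * (x ^ (c + Q) * y ^ b)
          = x ^ c * y ^ b * DD x y (Q + β) - x ^ c * y ^ (b + β) * DD x y Q := by
        rw [pow_add, pow_add]
        linear_combination (-(x ^ c * y ^ b)) * e1
      rw [e2]
      refine sub_mem ?_ ?_
      · exact key_mem x y α C A0 hA0max hβQS (by omega)
      · exact key_mem x y α C A0 hA0max hQS (by omega)
    · obtain ⟨c, rfl⟩ : ∃ c, b = c + Q := ⟨b - Q, by omega⟩
      have e1 := DD_add x y β Q
      have e2 : DD x y β * (x ^ a * y ^ (c + Q))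
          = x ^ a * y ^ c * DD x y (β + Q) - x ^ (a + β) * y ^ c * DD x y Q := by
        rw [pow_add, pow_add]
        linear_combination (-(x ^ a * y ^ c)) * e1
      rw [e2]
      refine sub_mem ?_ ?_
      · exact key_mem x y α C A0 hA0max (by rwa [Nat.add_comm Q β] at hβQS) (by omega)
      · exact key_mem x y α C A0 hA0max hQS (by omega)
  have zmul : ∀ v ∈ MM x y C, DD x y β * v ∈ II x y α • MM x y C := by
    intro v hv
    rw [MM] at hv
    induction hv using Submodule.span_induction with
    | mem v hv =>
      obtain ⟨a, ha, rfl⟩ := hv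
      simp only [Set.mem_Iic] at ha
      exact step a (C - a) (by omega)
    | zero => simp
    | add u v hu hv ihu ihv => rw [mul_add]; exact add_mem ihu ihv
    | smul t v hv ih =>
      have h7 : DD x y β * (t • v) = t • (DD x y β * v) := by
        simp only [smul_eq_mul]; ring
      rw [h7]; exact Submodule.smul_mem _ _ ih
  -- Cayley-Hamilton
  haveI hfg : Module.Finite T ↥(MM x y C) := by
    rw [Module.Finite.iff_fg, MM]
    exact Submodule.fg_span ((Set.finite_Iic C).image _)
  have hrange : LinearMap.range ((Algebra.lsmul T T ↥(MM x y C)) (DD x y β))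
      ≤ II x y α • (⊤ : Submodule T ↥(MM x y C)) := by
    rintro u ⟨v, rfl⟩
    rw [Submodule.mem_smul_top_iff]
    exact zmul _ v.2
  obtain ⟨P, hPmonic, -, hPcoeff, hPaeval⟩ :=
    LinearMap.exists_monic_and_coeff_mem_pow_and_aeval_eq_zero_of_range_le_smul
      T ((Algebra.lsmul T T ↥(MM x y C)) (DD x y β)) (II x y α) hrange
  -- derive the ring equation
  have hyCM : y ^ C ∈ MM x y C := by
    have h8 := mono_mem_MM x y C 0 C (by omega)
    rwa [pow_zero, one_mul] at h8
  have hev : (Polynomial.aeval (DD x y β) P) * y ^ C = 0 := by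
    have h1 : Polynomial.aeval ((Algebra.lsmul T T ↥(MM x y C)) (DD x y β)) P
        = (Algebra.lsmul T T ↥(MM x y C)) (Polynomial.aeval (DD x y β) P) :=
      Polynomial.aeval_algHom_apply _ _ _
    rw [h1] at hPaeval
    have h2 := congrArg (fun g : Module.End T ↥(MM x y C) => g ⟨y ^ C, hyCM⟩) hPaeval
    have h3 := congrArg (Subtype.val) h2
    simpa using h3
  have hPz : Polynomial.eval (DD x y β) P = 0 := by
    have := hreg _ hev
    rwa [← Polynomial.coe_aeval_eq_eval]
  -- assemble the integral equation
  rcases subsingleton_or_nontrivial T with hcase | hcase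
  · exact ⟨1, one_pos, 0, fun i => zero_mem _, Subsingleton.elim _ _⟩
  · set n : ℕ := P.natDegree with hn
    have hP'monic : (P * X).Monic := hPmonic.mul (Polynomial.monic_X)
    have hP'deg : (P * X).natDegree = n + 1 := by
      rw [Polynomial.Monic.natDegree_mul hPmonic Polynomial.monic_X,
        Polynomial.natDegree_X]
    have hP'coeff : ∀ k, (P * X).coeff k ∈ (II x y α) ^ (n + 1 - k) := by
      intro k
      rcases k with _ | k
      · rw [Polynomial.coeff_mul_X_zero]
        exact zero_mem _
      · rw [Polynomial.coeff_mul_X]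
        rcases le_or_gt k n with hk | hk
        · have h9 : P.coeff k ∈ (II x y α) ^ (n - k) := hPcoeff k
          have he : n + 1 - (k + 1) = n - k := by omega
          rwa [he]
        · have h9 : P.coeff k = 0 := Polynomial.coeff_eq_zero_of_natDegree_lt (by omega)
          rw [h9]; exact zero_mem _
    have hP'eval : Polynomial.eval (DD x y β) (P * X) = 0 := by
      rw [Polynomial.eval_mul, hPz, zero_mul]
    refine ⟨n + 1, by omega, fun j => (P * X).coeff (n + 1 - j), ?_, ?_⟩
    · intro j
      show (P * X).coeff (n + 1 - j) ∈ (II x y α) ^ j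
      rcases le_or_gt j (n + 1) with hj | hj
      · have h10 := hP'coeff (n + 1 - j)
        have he : n + 1 - (n + 1 - j) = j := by omega
        rwa [he] at h10
      · have he : n + 1 - j = 0 := by omega
        rw [he, Polynomial.coeff_mul_X_zero]
        exact zero_mem _
    · show DD x y β ^ (n + 1) + ∑ i ∈ Finset.range (n + 1),
          (P * X).coeff (n + 1 - (i + 1)) * DD x y β ^ (n + 1 - (i + 1)) = 0
      have hsum := Polynomial.eval_eq_sum_range (p := P * X) (DD x y β)
      rw [hP'deg, Finset.sum_range_succ, hP'eval] at hsum
      have htop : (P * X).coeff (n + 1) = 1 := by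
        have h11 := hP'monic.coeff_natDegree
        rwa [hP'deg] at h11
      rw [htop] at hsum
      have hsum2 : ∑ i ∈ Finset.range (n + 1),
            (P * X).coeff (n + 1 - (i + 1)) * DD x y β ^ (n + 1 - (i + 1))
          = ∑ i ∈ Finset.range (n + 1), (P * X).coeff i * DD x y β ^ i := by
        have h12 := Finset.sum_range_reflect
          (fun k => (P * X).coeff k * DD x y β ^ k) (n + 1)
        beta_reduce at h12
        rw [← h12]
        refine Finset.sum_congr rfl fun i hi => ?_
        have he : n + 1 - (i + 1) = n + 1 - 1 - i := by omega
        rw [he]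
      rw [hsum2]
      linear_combination -hsum

end LipschitzAux

open LipschitzAux in
theorem monomial_mem_lipschitzSaturation (R : Type*) [CommRing R] [IsNoetherianRing R]
    (m : ℕ) (hm : 2 ≤ m) (α : Fin m → ℕ) (hα : StrictMono α) (hpos : 0 < α ⟨0, by omega⟩)
    (s : ℕ) :
    MemIdealIntegralClosure
      (Ideal.span (Set.range fun i =>
        ((X : R[X]) ^ (α i)) ⊗ₜ[R] (1 : R[X]) - (1 : R[X]) ⊗ₜ[R] ((X : R[X]) ^ (α i))))
      (((X : R[X]) ^ (α ⟨m - 1, by omega⟩ + s * Finset.univ.gcd α)) ⊗ₜ[R] (1 : R[X]) -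
        (1 : R[X]) ⊗ₜ[R] ((X : R[X]) ^ (α ⟨m - 1, by omega⟩ + s * Finset.univ.gcd α))) := by
  classical
  have hgen : ∀ n : ℕ, ((X : R[X]) ^ n) ⊗ₜ[R] (1 : R[X]) - (1 : R[X]) ⊗ₜ[R] ((X : R[X]) ^ n)
      = DD ((X : R[X]) ⊗ₜ[R] (1 : R[X])) ((1 : R[X]) ⊗ₜ[R] (X : R[X])) n := by
    intro n
    rw [DD, Algebra.TensorProduct.tmul_pow, Algebra.TensorProduct.tmul_pow, one_pow]
  have hIdeal : (Ideal.span (Set.range fun i =>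
      ((X : R[X]) ^ (α i)) ⊗ₜ[R] (1 : R[X]) - (1 : R[X]) ⊗ₜ[R] ((X : R[X]) ^ (α i))))
      = II ((X : R[X]) ⊗ₜ[R] (1 : R[X])) ((1 : R[X]) ⊗ₜ[R] (X : R[X])) α := by
    unfold II
    refine congrArg Ideal.span (congrArg Set.range ?_)
    funext i
    exact hgen (α i)
  rw [hIdeal, hgen]
  -- Bezout data
  obtain ⟨zc, hzc⟩ := finset_gcd_bezout (Finset.univ : Finset (Fin m)) α
  have hpq : (∑ i, (zc i).toNat * α i) = (∑ i, (-(zc i)).toNat * α i) + Finset.univ.gcd α := by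
    have h1 : ((∑ i, (zc i).toNat * α i : ℕ) : ℤ) - ((∑ i, (-(zc i)).toNat * α i : ℕ) : ℤ)
        = ((Finset.univ.gcd α : ℕ) : ℤ) := by
      rw [hzc]
      push_cast
      rw [← Finset.sum_sub_distrib]
      refine Finset.sum_congr rfl fun i _ => ?_
      have h2 : ((zc i).toNat : ℤ) - ((-(zc i)).toNat : ℤ) = zc i := by omega
      rw [← sub_mul, h2]
    omega
  have hmemα : ∀ i, α i ∈ AddSubmonoid.closure (Set.range α) :=
    fun i => AddSubmonoid.subset_closure ⟨i, rfl⟩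
  have hpS : (∑ i, (zc i).toNat * α i) ∈ AddSubmonoid.closure (Set.range α) :=
    sum_mem fun i _ => mul_mem_closure _ (hmemα i) _
  have hqS : (∑ i, (-(zc i)).toNat * α i) ∈ AddSubmonoid.closure (Set.range α) :=
    sum_mem fun i _ => mul_mem_closure _ (hmemα i) _
  have hA0max : ∀ i, α i ≤ α ⟨m - 1, by omega⟩ := by
    intro i
    refine hα.monotone ?_
    rw [Fin.le_def]
    have := i.isLt
    simp only
    omega
  -- regularity of y
  have hreg : ∀ (k : ℕ) (w : R[X] ⊗[R] R[X]),
      w * ((1 : R[X]) ⊗ₜ[R] (X : R[X])) ^ k = 0 → w = 0 := by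
    intro k w h
    have hφy : (polyEquivTensor R R[X]).symm ((1 : R[X]) ⊗ₜ[R] (X : R[X])) = X := by
      rw [polyEquivTensor_symm_apply_tmul]
      rw [Polynomial.sum_X_index (by simp)]
      simp [Polynomial.monomial_one_one_eq_X]
    have h4 := congrArg (polyEquivTensor R R[X]).symm h
    rw [map_mul, map_pow, hφy, map_zero] at h4
    have h6 : (polyEquivTensor R R[X]).symm w = 0 := by
      have hreg' := (Polynomial.monic_X_pow (R := R[X]) k).isRegular.right
      apply hreg'
      simpa using h4
    have h7 := congrArg (polyEquivTensor R R[X]) h6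
    rwa [AlgEquiv.apply_symm_apply, map_zero] at h7
  exact main_abstract ((X : R[X]) ⊗ₜ[R] (1 : R[X])) ((1 : R[X]) ⊗ₜ[R] (X : R[X])) α
    (α ⟨m - 1, by omega⟩) (Finset.univ.gcd α)
    (∑ i, (zc i).toNat * α i) (∑ i, (-(zc i)).toNat * α i) s
    (s * (∑ i, (-(zc i)).toNat * α i)) (2 * (s * (∑ i, (-(zc i)).toNat * α i)))
    (α ⟨m - 1, by omega⟩ + s * Finset.univ.gcd α)
    (hmemα _) hA0max hpS hqS hpq rfl rfl rfl (hreg _)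
end

section
/- Let R be a noetherian domain with char(R) ≠ 2, let γ₂ > 2 be odd, A = R[t², t^{γ₂}] ⊆ B = R[t]. Then A is Lipschitz saturated in B over R: A*_{B,R} = A. -/
open scoped TensorProduct
open Polynomial

private lemma natTrailingDegree_pow' {R : Type*} [CommRing R] [IsDomain R]
    {g : R[X]} (hg : g ≠ 0) (n : ℕ) : (g ^ n).natTrailingDegree = n * g.natTrailingDegree := by
  induction n with
  | zero => simp
  | succ k ih =>
    rw [pow_succ, natTrailingDegree_mul (pow_ne_zero k hg) hg, ih]
    ring

private lemma key_dvd {R : Type*} [CommRing R] [IsDomain R] {γ n : ℕ}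
    {g : R[X]} {c : ℕ → R[X]} (hc : ∀ i, (X : R[X]) ^ (γ * i) ∣ c i)
    (heq : g ^ n + ∑ i ∈ Finset.range n, c (i + 1) * g ^ (n - (i + 1)) = 0) :
    (X : R[X]) ^ γ ∣ g := by
  rcases eq_or_ne g 0 with rfl | hg
  · exact dvd_zero _
  by_contra hnd
  set m := g.natTrailingDegree with hm
  have hmγ : m < γ := by
    by_contra h
    push_neg at h
    exact hnd (X_pow_dvd_iff.mpr fun d hd =>
      coeff_eq_zero_of_lt_natTrailingDegree (lt_of_lt_of_le hd h))
  have hXm : (X : R[X]) ^ m ∣ g :=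
    X_pow_dvd_iff.mpr fun d hd => coeff_eq_zero_of_lt_natTrailingDegree hd
  have hcoef : (g ^ n).coeff (n * m) ≠ 0 := by
    have h1 : (g ^ n).trailingCoeff ≠ 0 :=
      trailingCoeff_nonzero_iff_nonzero.mpr (pow_ne_zero n hg)
    rwa [trailingCoeff, natTrailingDegree_pow' hg, ← hm] at h1
  apply hcoef
  have h2 : g ^ n = -∑ i ∈ Finset.range n, c (i + 1) * g ^ (n - (i + 1)) :=
    eq_neg_of_add_eq_zero_left heq
  rw [h2, coeff_neg, finset_sum_coeff, neg_eq_zero]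
  refine Finset.sum_eq_zero fun i hi => ?_
  have hin : i < n := Finset.mem_range.mp hi
  obtain ⟨k, hk⟩ : ∃ k, n = (i + 1) + k := ⟨n - (i + 1), by omega⟩
  have hdvd : (X : R[X]) ^ (γ * (i + 1) + m * k) ∣ c (i + 1) * g ^ (n - (i + 1)) := by
    rw [pow_add]
    exact mul_dvd_mul (hc (i + 1))
      (by rw [hk, Nat.add_sub_cancel_left, pow_mul]
          exact pow_dvd_pow_of_dvd hXm k)
  have hlt : n * m < γ * (i + 1) + m * k := by
    subst hk
    have : (i + 1) * m < (i + 1) * γ := (Nat.mul_lt_mul_left (Nat.succ_pos i)).mpr hmγ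
    nlinarith
  exact X_pow_dvd_iff.mp hdvd (n * m) hlt

private lemma aeval_neg_X_coeff {R : Type*} [CommRing R] (f : R[X]) (k : ℕ) :
    ((aeval (-X : R[X])) f).coeff k = (-1) ^ k * f.coeff k := by
  induction f using Polynomial.induction_on' with
  | add p q hp hq => simp [hp, hq, mul_add]
  | monomial n a =>
    rw [aeval_monomial, neg_pow, ← C_eq_algebraMap,
      show ((-1 : R[X]) ^ n) = C ((-1 : R) ^ n) by rw [map_pow, map_neg, map_one],
      ← mul_assoc, ← C_mul, C_mul_X_pow_eq_monomial, coeff_monomial, coeff_monomial]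
    split_ifs with h
    · subst h; ring
    · ring

private lemma mem_adjoin_of_coeffs {R : Type*} [CommRing R] {γ : ℕ} (hodd : Odd γ) (f : R[X])
    (h : ∀ k, Odd k → k < γ → f.coeff k = 0) :
    f ∈ Algebra.adjoin R ({(X : R[X]) ^ 2, (X : R[X]) ^ γ} : Set R[X]) := by
  set A := Algebra.adjoin R ({(X : R[X]) ^ 2, (X : R[X]) ^ γ} : Set R[X]) with hA
  have hx2 : (X : R[X]) ^ 2 ∈ A := Algebra.subset_adjoin (Or.inl rfl)
  have hxγ : (X : R[X]) ^ γ ∈ A := Algebra.subset_adjoin (Or.inr rfl)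
  have hpow : ∀ k : ℕ, Even k → (X : R[X]) ^ k ∈ A := by
    rintro k ⟨j, rfl⟩
    have : (X : R[X]) ^ (j + j) = ((X : R[X]) ^ 2) ^ j := by
      rw [← pow_mul]; ring_nf
    rw [this]
    exact pow_mem hx2 j
  rw [f.as_sum_support]
  refine Subalgebra.sum_mem _ fun i hi => ?_
  rw [← C_mul_X_pow_eq_monomial]
  refine Subalgebra.mul_mem _ ?_ ?_
  · exact Subalgebra.algebraMap_mem A (f.coeff i)
  rcases Nat.even_or_odd i with he | ho
  · exact hpow i he
  · have hge : γ ≤ i := by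
      by_contra hlt
      push_neg at hlt
      exact (Polynomial.mem_support_iff.mp hi) (h i ho hlt)
    have : (X : R[X]) ^ i = (X : R[X]) ^ γ * (X : R[X]) ^ (i - γ) := by
      rw [← pow_add, Nat.add_sub_cancel' hge]
    rw [this]
    exact Subalgebra.mul_mem _ hxγ (hpow _ (Nat.Odd.sub_odd ho hodd))

/-- The map `R[X] ⊗[R] R[X] → R[X]`, `p ⊗ q ↦ p(X) q(-X)`. -/
noncomputable def psiMap (R : Type*) [CommRing R] : R[X] ⊗[R] R[X] →ₐ[R] R[X] :=
  Algebra.TensorProduct.lift (AlgHom.id R R[X]) (aeval (-X : R[X]))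
    (fun _ _ => Commute.all _ _)

private lemma psiMap_tmul {R : Type*} [CommRing R] (p q : R[X]) :
    psiMap R (p ⊗ₜ[R] q) = p * (aeval (-X : R[X])) q := by
  simp [psiMap]

set_option synthInstance.maxHeartbeats 1000000 in
set_option maxHeartbeats 2000000 in
private lemma psiMap_ker {R : Type*} [CommRing R] {γ₂ : ℕ} (hodd : Odd γ₂)
    {z : R[X] ⊗[R] R[X]}
    (hz : z ∈ RingHom.ker (canonicalTensorMap R
      (Algebra.adjoin R ({(X : R[X]) ^ 2, (X : R[X]) ^ γ₂} : Set R[X])) R[X])) :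
    psiMap R z ∈ Ideal.span {(X : R[X]) ^ γ₂} := by
  set A := Algebra.adjoin R ({(X : R[X]) ^ 2, (X : R[X]) ^ γ₂} : Set R[X]) with hA
  set J : Ideal R[X] := Ideal.span {(X : R[X]) ^ γ₂} with hJ
  set π : R[X] →ₐ[R] R[X] ⧸ J := Ideal.Quotient.mkₐ R J with hπ
  set p₂ : R[X] →ₐ[R] R[X] ⧸ J := π.comp (aeval (-X : R[X])) with hp₂
  have hagree : ∀ g ∈ A, π g = p₂ g := by
    have hle : A ≤ AlgHom.equalizer π p₂ := by
      apply Algebra.adjoin_le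
      intro x hx
      simp only [Set.mem_insert_iff, Set.mem_singleton_iff] at hx
      rcases hx with rfl | rfl
      · show π (X ^ 2) = p₂ (X ^ 2)
        simp [hp₂, neg_pow]
      · show π (X ^ γ₂) = p₂ (X ^ γ₂)
        have h1 : π ((X : R[X]) ^ γ₂) = 0 := by
          rw [hπ, Ideal.Quotient.mkₐ_eq_mk, Ideal.Quotient.eq_zero_iff_mem]
          exact Ideal.subset_span rfl
        have h2 : (aeval (-X : R[X])) ((X : R[X]) ^ γ₂) = -(X ^ γ₂) := by
          simp [hodd.neg_pow]
        rw [hp₂, AlgHom.comp_apply, h2, map_neg, h1, neg_zero]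
    exact fun g hg => hle hg
  have hcomm : ∀ a : A, (Ideal.Quotient.mk J) ((algebraMap A R[X]) a)
      = algebraMap A (R[X] ⧸ J) a := fun a => rfl
  let p₁' : R[X] →ₐ[A] R[X] ⧸ J :=
    { toRingHom := Ideal.Quotient.mk J, commutes' := fun a => rfl }
  let p₂' : R[X] →ₐ[A] R[X] ⧸ J :=
    { toRingHom := p₂.toRingHom, commutes' := fun a => ((hagree _ a.2).symm : p₂ _ = π _) }
  let θ : R[X] ⊗[A] R[X] →ₐ[A] R[X] ⧸ J :=
    Algebra.TensorProduct.lift p₁' p₂' (fun _ _ => Commute.all _ _)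
  have h_fact : ∀ w : R[X] ⊗[R] R[X],
      θ (canonicalTensorMap R A R[X] w) = π (psiMap R w) := by
    intro w
    induction w using TensorProduct.induction_on with
    | zero => simp
    | tmul x y =>
      rw [psiMap_tmul, map_mul]
      simp only [canonicalTensorMap, Algebra.TensorProduct.lift_tmul,
        Algebra.TensorProduct.includeLeft_apply, AlgHom.coe_restrictScalars',
        Algebra.TensorProduct.includeRight_apply, map_mul,
        Algebra.TensorProduct.tmul_mul_tmul, one_mul, mul_one]
      rw [show ((x : R[X]) ⊗ₜ[A] (y : R[X])) = x ⊗ₜ[A] 1 * 1 ⊗ₜ[A] y by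
        rw [Algebra.TensorProduct.tmul_mul_tmul, one_mul, mul_one]]
      rw [map_mul]
      congr 1
      · show θ (x ⊗ₜ[A] 1) = π x
        exact (Algebra.TensorProduct.lift_tmul _ _ _ x 1).trans (by simp [p₁', p₂', hp₂, hπ,
          Ideal.Quotient.mkₐ_eq_mk])
      · show θ (1 ⊗ₜ[A] y) = π ((aeval (-X : R[X])) y)
        exact (Algebra.TensorProduct.lift_tmul _ _ _ 1 y).trans (by simp [p₁', p₂', hp₂, hπ,
          Ideal.Quotient.mkₐ_eq_mk])
    | add u v hu hv => simp [map_add, hu, hv]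
  have hz0 : canonicalTensorMap R A R[X] z = 0 := hz
  have : π (psiMap R z) = 0 := by rw [← h_fact, hz0, map_zero]
  rwa [hπ, Ideal.Quotient.mkₐ_eq_mk, Ideal.Quotient.eq_zero_iff_mem] at this

set_option synthInstance.maxHeartbeats 1000000 in
set_option maxHeartbeats 2000000 in
theorem gamma_one_eq_two_lipschitz_saturated (R : Type*) [CommRing R] [IsDomain R]
    [IsNoetherianRing R] (hchar : ringChar R ≠ 2) (γ₂ : ℕ) (hodd : Odd γ₂) (hγ : 2 < γ₂) :
    lipschitzSaturation R
        (Algebra.adjoin R ({(X : R[X]) ^ 2, (X : R[X]) ^ γ₂} : Set R[X])) R[X] =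
      (Algebra.adjoin R ({(X : R[X]) ^ 2, (X : R[X]) ^ γ₂} : Set R[X]) : Set R[X]) := by
  have h2ne : (2 : R) ≠ 0 := by
    intro h2
    have hd : ringChar R ∣ 2 := (ringChar.spec R 2).mp (by exact_mod_cast h2)
    rcases (Nat.prime_two.eq_one_or_self_of_dvd _ hd) with h1 | h1
    · have : ((1 : ℕ) : R) = 0 := (ringChar.spec R 1).mpr (h1 ▸ dvd_refl _)
      simp at this
    · exact hchar h1
  set A := Algebra.adjoin R ({(X : R[X]) ^ 2, (X : R[X]) ^ γ₂} : Set R[X]) with hA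
  ext f
  simp only [lipschitzSaturation, Set.mem_setOf_eq, SetLike.mem_coe]
  constructor
  · rintro ⟨n, hn, c, hc, heq⟩
    -- map everything through psiMap
    set g : R[X] := f - (aeval (-X : R[X])) f with hg
    have hgz : psiMap R (f ⊗ₜ[R] (1 : R[X]) - (1 : R[X]) ⊗ₜ[R] f) = g := by
      rw [map_sub, psiMap_tmul, psiMap_tmul]
      simp [hg]
    have hci : ∀ i, (X : R[X]) ^ (γ₂ * i) ∣ psiMap R (c i) := by
      intro i
      have h1 : psiMap R (c i) ∈ Ideal.map (psiMap R).toRingHom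
          ((RingHom.ker (canonicalTensorMap R A R[X])) ^ i) :=
        Ideal.mem_map_of_mem _ (hc i)
      rw [Ideal.map_pow] at h1
      have h2 : Ideal.map (psiMap R).toRingHom (RingHom.ker (canonicalTensorMap R A R[X]))
          ≤ Ideal.span {(X : R[X]) ^ γ₂} := by
        rw [Ideal.map_le_iff_le_comap]
        intro w hw
        exact psiMap_ker hodd hw
      have h3 : psiMap R (c i) ∈ (Ideal.span {(X : R[X]) ^ γ₂}) ^ i :=
        (Ideal.pow_right_mono h2 i) h1
      rwa [Ideal.span_singleton_pow, ← pow_mul, Ideal.mem_span_singleton] at h3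
    have heq2 : g ^ n + ∑ i ∈ Finset.range n,
        (psiMap R (c (i + 1))) * g ^ (n - (i + 1)) = 0 := by
      have := congrArg (psiMap R) heq
      rw [map_add, map_pow, map_sum, map_zero, hgz] at this
      simpa [map_mul, map_pow, hgz] using this
    have hXdvd : (X : R[X]) ^ γ₂ ∣ g := key_dvd hci heq2
    apply mem_adjoin_of_coeffs hodd
    intro k hk hkγ
    have hgk : g.coeff k = 0 := X_pow_dvd_iff.mp hXdvd k hkγ
    rw [hg, coeff_sub, aeval_neg_X_coeff, hk.neg_one_pow] at hgk
    have : (2 : R) * f.coeff k = 0 := by ring_nf at hgk ⊢; linear_combination hgk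
    rcases mul_eq_zero.mp this with h | h
    · exact absurd h h2ne
    · exact h
  · intro hf
    have hker : f ⊗ₜ[R] (1 : R[X]) - (1 : R[X]) ⊗ₜ[R] f
        ∈ RingHom.ker (canonicalTensorMap R A R[X]) := by
      rw [RingHom.mem_ker, map_sub]
      have e1 : canonicalTensorMap R A R[X] (f ⊗ₜ[R] 1) = f ⊗ₜ[A] 1 := by
        simp [canonicalTensorMap]
      have e2 : canonicalTensorMap R A R[X] ((1 : R[X]) ⊗ₜ[R] f) = (1 : R[X]) ⊗ₜ[A] f := by
        simp [canonicalTensorMap]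
      rw [e1, e2]
      have hfa : (⟨f, hf⟩ : A) • (1 : R[X]) = f := by
        rw [Algebra.smul_def, mul_one]; rfl
      rw [sub_eq_zero]
      calc (f ⊗ₜ[A] (1 : R[X]) : R[X] ⊗[A] R[X])
          = ((⟨f, hf⟩ : A) • (1 : R[X])) ⊗ₜ[A] (1 : R[X]) := by rw [hfa]
        _ = (1 : R[X]) ⊗ₜ[A] ((⟨f, hf⟩ : A) • (1 : R[X])) := TensorProduct.smul_tmul _ _ _
        _ = (1 : R[X]) ⊗ₜ[A] f := by rw [hfa]
    refine ⟨1, one_pos, fun i => if i = 1 then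
      -(f ⊗ₜ[R] (1 : R[X]) - (1 : R[X]) ⊗ₜ[R] f) else 0, ?_, ?_⟩
    · intro i
      by_cases hi : i = 1
      · subst hi
        simpa using neg_mem hker
      · simp [hi]
    · simp
end
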